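/- In the (s,R)-disperser widget, if a colouring sequence colours the receive vertex r_s (on the master component) yellow, then the sequence can be extended to colour all the send vertices t_r, r ∈ R, on the slave components yellow, even with zero tokens assigned to all disperser components. -/

import Mathlib

/-! Formal framework: communication graphs and the red/yellow/green colouring game
(Brodsky–Pedersen–Wagner, "On the Complexity of Buffer Allocation in Message Passing Systems"),
with receive-side token pools. -/

inductive Colour : Type
  | red | yellow | green
deriving DecidableEq

/-- A communication graph: vertices are partitioned into start/send/receive/end vertices,
`pred u v` means `u` is the component predecessor of `v` (a process arc `u → v`),
`matched u v` is a communication arc from send `u` to its matching receive `v`,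
`comp v` is the index of the process component of `v`, and `pos v` is the position
of `v` within its component chain. -/
structure CommGraph (V : Type) where
  isStart : V → Prop
  isSend : V → Prop
  isRecv : V → Prop
  isEnd : V → Prop
  pred : V → V → Prop
  matched : V → V → Prop
  comp : V → ℕ
  pos : V → ℕ

namespace CommGraph

variable {V : Type}

/-- An arc of the communication graph (process arc or communication arc). -/
def GArc (G : CommGraph V) (u v : V) : Prop := G.pred u v ∨ G.matched u v

/-- Well-formedness of a communication graph: the vertex kinds partition `V`,
components are chains (unique predecessors, positions increase along process arcs),
communication arcs go from sends to receives in different components and form a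
partial matching, and the graph is acyclic (arcs admit no infinite descent). -/
structure WF (G : CommGraph V) : Prop where
  kinds : ∀ v, G.isStart v ∨ G.isSend v ∨ G.isRecv v ∨ G.isEnd v
  start_not_send : ∀ v, G.isStart v → ¬ G.isSend v
  start_not_recv : ∀ v, G.isStart v → ¬ G.isRecv v
  start_not_end : ∀ v, G.isStart v → ¬ G.isEnd v
  send_not_recv : ∀ v, G.isSend v → ¬ G.isRecv v
  send_not_end : ∀ v, G.isSend v → ¬ G.isEnd v
  recv_not_end : ∀ v, G.isRecv v → ¬ G.isEnd v
  pred_unique : ∀ {u u' v}, G.pred u v → G.pred u' v → u = u'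
  pred_comp : ∀ {u v}, G.pred u v → G.comp u = G.comp v
  pred_pos : ∀ {u v}, G.pred u v → G.pos v = G.pos u + 1
  start_no_pred : ∀ {u v}, G.pred u v → ¬ G.isStart v
  has_pred : ∀ v, ¬ G.isStart v → ∃ u, G.pred u v
  matched_send : ∀ {u v}, G.matched u v → G.isSend u
  matched_recv : ∀ {u v}, G.matched u v → G.isRecv v
  matched_comp : ∀ {u v}, G.matched u v → G.comp u ≠ G.comp v
  matched_unique_left : ∀ {u u' v}, G.matched u v → G.matched u' v → u = u'
  matched_unique_right : ∀ {u v v'}, G.matched u v → G.matched u v' → v = v'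
  send_has_match : ∀ v, G.isSend v → ∃ w, G.matched v w
  recv_has_match : ∀ v, G.isRecv v → ∃ w, G.matched w v
  dag : WellFounded fun u v => G.GArc u v

end CommGraph

/-- A state of the colouring game: the colouring, which receive vertices currently
hold a token on their incident communication arc, and the number of available
tokens in each (per-process, receive-side) pool. -/
structure St (V : Type) where
  col : V → Colour
  tok : V → Bool
  pool : ℕ → ℕ

/-- The names of the colouring rules. -/
inductive Rule : Type
  | sendYel | recvYel | recvYelTok | sendGrn | recvGrn | endYel | endGrn
deriving DecidableEq

variable {V : Type}

/-- One move of the colouring game (receive-side buffering: the token used by the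
buffered-receive rule `recvYelTok` comes from the pool of the receiving component,
and is returned when the receive turns green). -/
inductive Step [DecidableEq V] (G : CommGraph V) : Rule → St V → St V → Prop
  | sendYel {s : St V} {v u : V} :
      G.isSend v → s.col v = .red → G.pred u v → s.col u = .green →
      Step G .sendYel s ⟨Function.update s.col v .yellow, s.tok, s.pool⟩
  | recvYel {s : St V} {v u w : V} :
      G.isRecv v → s.col v = .red → G.matched w v → s.col w = .yellow →
      G.pred u v → s.col u = .green →
      Step G .recvYel s ⟨Function.update s.col v .yellow, s.tok, s.pool⟩
  | recvYelTok {s : St V} {v w : V} :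
      G.isRecv v → s.col v = .red → G.matched w v → s.col w = .yellow →
      0 < s.pool (G.comp v) →
      Step G .recvYelTok s ⟨Function.update s.col v .yellow,
        Function.update s.tok v true,
        Function.update s.pool (G.comp v) (s.pool (G.comp v) - 1)⟩
  | sendGrn {s : St V} {v r : V} :
      G.isSend v → s.col v = .yellow → G.matched v r → s.col r = .yellow →
      Step G .sendGrn s ⟨Function.update s.col v .green, s.tok, s.pool⟩
  | recvGrn {s : St V} {v u w : V} :
      G.isRecv v → s.col v = .yellow → G.pred u v → s.col u = .green →
      G.matched w v → s.col w = .green →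
      Step G .recvGrn s ⟨Function.update s.col v .green,
        Function.update s.tok v false,
        if s.tok v then
          Function.update s.pool (G.comp v) (s.pool (G.comp v) + 1)
        else s.pool⟩
  | endYel {s : St V} {v u : V} :
      G.isEnd v → s.col v = .red → G.pred u v → s.col u = .green →
      Step G .endYel s ⟨Function.update s.col v .yellow, s.tok, s.pool⟩
  | endGrn {s : St V} {v : V} :
      G.isEnd v → s.col v = .yellow →
      Step G .endGrn s ⟨Function.update s.col v .green, s.tok, s.pool⟩

/-- `IsSeq G s l` : the list `l` of (rule, state) pairs is a valid colouring sequence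
starting from state `s`. -/
def IsSeq [DecidableEq V] (G : CommGraph V) : St V → List (Rule × St V) → Prop
  | _, [] => True
  | s, p :: l => Step G p.1 s p.2 ∧ IsSeq G p.2 l

/-- The list of states visited by a colouring sequence. -/
def states (s0 : St V) (l : List (Rule × St V)) : List (St V) :=
  s0 :: l.map Prod.snd

/-- The final state of a colouring sequence. -/
def finalSt (s0 : St V) (l : List (Rule × St V)) : St V :=
  (states s0 l).getLast (by simp [states])

open Classical in
/-- The initial state: start vertices green, all others red, no tokens placed,
token pools given by the token assignment `B` (pool of component `i` holds `B i`). -/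
noncomputable def init (G : CommGraph V) (B : ℕ → ℕ) : St V :=
  ⟨fun v => if G.isStart v then Colour.green else Colour.red, fun _ => false, B⟩

/-- A state from which no colouring rule applies. -/
def MaximalFrom [DecidableEq V] (G : CommGraph V) (s : St V) : Prop :=
  ∀ ρ t, ¬ Step G ρ s t

/-- A state is complete when every vertex is green. -/
def Completes (s : St V) : Prop := ∀ v, s.col v = Colour.green

/-- A deadlocking colouring sequence from `s0`: a maximal sequence whose final
colouring has a non-green vertex. -/
def Deadlocks [DecidableEq V] (G : CommGraph V) (s0 : St V) (l : List (Rule × St V)) : Prop :=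
  IsSeq G s0 l ∧ MaximalFrom G (finalSt s0 l) ∧ ¬ Completes (finalSt s0 l)

/-- The system is safe (deadlock free) under token assignment `B`:
every maximal colouring sequence completes. -/
def DeadlockFree [DecidableEq V] (G : CommGraph V) (B : ℕ → ℕ) : Prop :=
  ∀ l, IsSeq G (init G B) l → MaximalFrom G (finalSt (init G B) l) →
    Completes (finalSt (init G B) l)

/-- A state blocks: some yellow send has a matching red receive to which the
buffered-receive rule cannot be applied (no token available). -/
def Blocked (G : CommGraph V) (s : St V) : Prop :=
  ∃ v r, G.matched v r ∧ s.col v = Colour.yellow ∧ s.col r = Colour.red ∧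
    s.pool (G.comp r) = 0

/-- The graph is block free under token assignment `B`: no colouring sequence blocks. -/
def BlockFree [DecidableEq V] (G : CommGraph V) (B : ℕ → ℕ) : Prop :=
  ∀ l, IsSeq G (init G B) l → ¬ Blocked G (finalSt (init G B) l)


/-! Every state reachable from the initial one is consistent: along a communication arc `w → x`
the receive `x` is never further advanced (red < yellow < green) than the send `w`, and a green
send has a non-red receive. In a consistent state each move the widget needs (a send turning
yellow after its predecessor, a receive turning yellow or green, a yellow send turning green) is
either already made or enabled, whatever the colours of the other vertices; since green and
non-red persist, these moves chain. So `sE` and `rs` turn green, then for each slave in turn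
`sv k` and `qv k` go yellow and green and `tv k` goes yellow. Every receive is coloured by the
unbuffered rule, so no tokens are used. -/

section Colouring

open Relation

variable {G : CommGraph V}

lemma finalSt_cons (s : St V) (p : Rule × St V) (l : List (Rule × St V)) :
    finalSt s (p :: l) = finalSt p.2 l := by
  simp only [finalSt, states, List.map_cons]
  exact List.getLast_cons _

lemma init_col_of_isStart {x : V} (B : ℕ → ℕ) (hx : G.isStart x) :
    (init G B).col x = .green :=
  if_pos hx

lemma init_col_of_not_isStart {x : V} (B : ℕ → ℕ) (hx : ¬ G.isStart x) :
    (init G B).col x = .red :=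
  if_neg hx

structure Consistent (G : CommGraph V) (s : St V) : Prop where
  sender_ne_red : ∀ {w x}, G.matched w x → s.col x ≠ .red → s.col w ≠ .red
  sender_green : ∀ {w x}, G.matched w x → s.col x = .green → s.col w = .green
  receiver_ne_red : ∀ {w x}, G.matched w x → s.col w = .green → s.col x ≠ .red

lemma consistent_init (hwf : G.WF) (B : ℕ → ℕ) : Consistent G (init G B) where
  sender_ne_red hwx hx :=
    absurd (init_col_of_not_isStart B fun h => hwf.start_not_recv _ h (hwf.matched_recv hwx)) hx
  sender_green hwx hx := by
    rw [init_col_of_not_isStart B fun h => hwf.start_not_recv _ h (hwf.matched_recv hwx)] at hx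
    cases hx
  receiver_ne_red hwx hw := by
    rw [init_col_of_not_isStart B fun h => hwf.start_not_send _ h (hwf.matched_send hwx)] at hw
    cases hw

variable [DecidableEq V]

def Move (G : CommGraph V) (s t : St V) : Prop := ∃ ρ, Step G ρ s t

lemma reflTransGen_finalSt {s : St V} {l : List (Rule × St V)} (h : IsSeq G s l) :
    ReflTransGen (Move G) s (finalSt s l) := by
  induction l generalizing s with
  | nil => exact .refl
  | cons p l ih =>
    rw [finalSt_cons]
    exact .head ⟨p.1, h.1⟩ (ih h.2)

lemma exists_isSeq_of_reflTransGen {s t : St V} (h : ReflTransGen (Move G) s t) :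
    ∃ l, IsSeq G s l ∧ finalSt s l = t := by
  induction h using ReflTransGen.head_induction_on with
  | refl => exact ⟨[], trivial, rfl⟩
  | head hst _ ih =>
    obtain ⟨ρ, hst⟩ := hst
    obtain ⟨l, hl, rfl⟩ := ih
    exact ⟨(ρ, _) :: l, ⟨hst, hl⟩, finalSt_cons _ _ _⟩

namespace Step

variable {ρ : Rule} {s t : St V} {w x : V}

lemma col_eq_green (h : Step G ρ s t) (hx : s.col x = .green) : t.col x = .green := by
  cases h <;> simp only [Function.update_apply] <;> split_ifs <;> simp_all

lemma col_ne_red (h : Step G ρ s t) (hx : s.col x ≠ .red) : t.col x ≠ .red := by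
  cases h <;> simp only [Function.update_apply] <;> split_ifs <;> simp_all

lemma sender_yellow_of_leaves_red (hwf : G.WF) (hwx : G.matched w x) (h : Step G ρ s t)
    (hs : s.col x = .red) (ht : t.col x ≠ .red) : s.col w = .yellow := by
  have hx := hwf.matched_recv hwx
  have := hwf.send_not_recv x
  have := hwf.recv_not_end x hx
  have huniq : ∀ {w'}, G.matched w' x → w' = w := (hwf.matched_unique_left · hwx)
  cases h <;> simp only [Function.update_apply] at ht <;> split_ifs at ht <;> simp_all

lemma sender_green_of_becomes_green (hwf : G.WF) (hwx : G.matched w x) (h : Step G ρ s t)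
    (hs : s.col x ≠ .green) (ht : t.col x = .green) : s.col w = .green := by
  have hx := hwf.matched_recv hwx
  have := hwf.send_not_recv x
  have := hwf.recv_not_end x hx
  have huniq : ∀ {w'}, G.matched w' x → w' = w := (hwf.matched_unique_left · hwx)
  cases h <;> simp only [Function.update_apply] at ht <;> split_ifs at ht <;> simp_all

lemma receiver_yellow_of_becomes_green (hwf : G.WF) (hwx : G.matched w x) (h : Step G ρ s t)
    (hs : s.col w ≠ .green) (ht : t.col w = .green) : s.col x = .yellow := by
  have hw := hwf.matched_send hwx
  have := hwf.send_not_recv w hw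
  have := hwf.send_not_end w hw
  have huniq : ∀ {x'}, G.matched w x' → x' = x := (hwf.matched_unique_right · hwx)
  cases h <;> simp only [Function.update_apply] at ht <;> split_ifs at ht <;> simp_all

end Step

lemma col_eq_green_of_reflTransGen {s t : St V} {x : V}
    (h : ReflTransGen (Move G) s t) (hx : s.col x = .green) : t.col x = .green := by
  induction h with
  | refl => exact hx
  | tail _ hst ih => exact hst.choose_spec.col_eq_green ih

lemma col_ne_red_of_reflTransGen {s t : St V} {x : V}
    (h : ReflTransGen (Move G) s t) (hx : s.col x ≠ .red) : t.col x ≠ .red := by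
  induction h with
  | refl => exact hx
  | tail _ hst ih => exact hst.choose_spec.col_ne_red ih

lemma Consistent.step (hwf : G.WF) {ρ : Rule} {s t : St V} (hs : Consistent G s)
    (h : Step G ρ s t) : Consistent G t where
  sender_ne_red {_ x} hwx hx := by
    by_cases hsx : s.col x = .red
    · exact h.col_ne_red (by rw [h.sender_yellow_of_leaves_red hwf hwx hsx hx]; decide)
    · exact h.col_ne_red (hs.sender_ne_red hwx hsx)
  sender_green {_ x} hwx hx := by
    by_cases hsx : s.col x = .green
    · exact h.col_eq_green (hs.sender_green hwx hsx)
    · exact h.col_eq_green (h.sender_green_of_becomes_green hwf hwx hsx hx)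
  receiver_ne_red {w _} hwx hw := by
    by_cases hsw : s.col w = .green
    · exact h.col_ne_red (hs.receiver_ne_red hwx hsw)
    · exact h.col_ne_red (by rw [h.receiver_yellow_of_becomes_green hwf hwx hsw hw]; decide)

lemma Consistent.of_reflTransGen (hwf : G.WF) {s t : St V} (hs : Consistent G s)
    (h : ReflTransGen (Move G) s t) : Consistent G t := by
  induction h with
  | refl => exact hs
  | tail _ hst ih => exact ih.step hwf hst.choose_spec

variable {s : St V} {u v w : V}

lemma exists_send_ne_red (hv : G.isSend v) (hu : G.pred u v) (hug : s.col u = .green) :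
    ∃ t, ReflTransGen (Move G) s t ∧ t.col v ≠ .red := by
  by_cases hvr : s.col v = .red
  · exact ⟨_, .single ⟨_, .sendYel hv hvr hu hug⟩, by simp⟩
  · exact ⟨s, .refl, hvr⟩

namespace Consistent

lemma exists_recv_ne_red (hs : Consistent G s) (hwf : G.WF) (hwv : G.matched w v)
    (hw : s.col w ≠ .red) (hu : G.pred u v) (hug : s.col u = .green) :
    ∃ t, ReflTransGen (Move G) s t ∧ t.col v ≠ .red := by
  by_cases hvr : s.col v = .red
  · cases hwc : s.col w with
    | red => exact absurd hwc hw
    | yellow =>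
      exact ⟨_, .single ⟨_, .recvYel (hwf.matched_recv hwv) hvr hwv hwc hu hug⟩, by simp⟩
    | green => exact absurd hvr (hs.receiver_ne_red hwv hwc)
  · exact ⟨s, .refl, hvr⟩

lemma exists_send_green (hs : Consistent G s) (hwf : G.WF) (hvw : G.matched v w)
    (hv : s.col v ≠ .red) (hw : s.col w ≠ .red) :
    ∃ t, ReflTransGen (Move G) s t ∧ t.col v = .green := by
  cases hvc : s.col v with
  | red => exact absurd hvc hv
  | green => exact ⟨s, .refl, hvc⟩
  | yellow =>
    cases hwc : s.col w with
    | red => exact absurd hwc hw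
    | yellow => exact ⟨_, .single ⟨_, .sendGrn (hwf.matched_send hvw) hvc hvw hwc⟩, by simp⟩
    | green => simp [hs.sender_green hvw hwc] at hvc

lemma exists_recv_green (hs : Consistent G s) (hwf : G.WF) (hwv : G.matched w v)
    (hv : s.col v ≠ .red) (hu : G.pred u v) (hug : s.col u = .green) :
    ∃ t, ReflTransGen (Move G) s t ∧ t.col v = .green := by
  obtain ⟨t, hst, hwt⟩ := hs.exists_send_green hwf hwv (hs.sender_ne_red hwv hv) hv
  cases hvc : t.col v with
  | red => exact absurd hvc (col_ne_red_of_reflTransGen hst hv)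
  | green => exact ⟨t, hst, hvc⟩
  | yellow =>
    have hut := col_eq_green_of_reflTransGen hst hug
    exact ⟨_, hst.tail ⟨_, .recvGrn (hwf.matched_recv hwv) hvc hu hut hwv hwt⟩, by simp⟩

lemma exists_slave_ne_red (hs : Consistent G s) (hwf : G.WF) {p q t : V}
    (hu : G.pred u v) (hug : s.col u = .green) (hvq : G.matched v q)
    (hp : G.pred p q) (hpg : s.col p = .green) (hqt : G.pred q t) (ht : G.isSend t) :
    ∃ s', ReflTransGen (Move G) s s' ∧ s'.col v = .green ∧ s'.col t ≠ .red := by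
  obtain ⟨s₁, h₁, hv₁⟩ := exists_send_ne_red (hwf.matched_send hvq) hu hug
  obtain ⟨s₂, h₂, hq₂⟩ := (hs.of_reflTransGen hwf h₁).exists_recv_ne_red hwf hvq hv₁ hp
    (col_eq_green_of_reflTransGen h₁ hpg)
  have h₁₂ := h₁.trans h₂
  have hs₂ := hs.of_reflTransGen hwf h₁₂
  obtain ⟨s₃, h₃, hq₃⟩ :=
    hs₂.exists_recv_green hwf hvq hq₂ hp (col_eq_green_of_reflTransGen h₁₂ hpg)
  obtain ⟨s₄, h₄, ht₄⟩ := exists_send_ne_red ht hqt hq₃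
  have hv₃ := (hs₂.of_reflTransGen hwf h₃).sender_green hvq hq₃
  exact ⟨s₄, h₁₂.trans (h₃.trans h₄), col_eq_green_of_reflTransGen h₄ hv₃, ht₄⟩

lemma exists_slaves_ne_red (hs : Consistent G s) (hwf : G.WF) {m : ℕ} {sv qv tv stS : ℕ → V}
    (hug : s.col u = .green) (hm0 : 0 < m → G.pred u (sv 0))
    (hchain : ∀ k, k + 1 < m → G.pred (sv k) (sv (k + 1)))
    (hmatch : ∀ k < m, G.matched (sv k) (qv k)) (hpq : ∀ k < m, G.pred (stS k) (qv k))
    (hstS : ∀ k < m, s.col (stS k) = .green) (hqt : ∀ k < m, G.pred (qv k) (tv k))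
    (htv : ∀ k < m, G.isSend (tv k)) :
    ∃ t, ReflTransGen (Move G) s t ∧ ∀ k < m, t.col (tv k) ≠ .red := by
  suffices ∀ n ≤ m, ∃ t, ReflTransGen (Move G) s t ∧
      (∃ u', t.col u' = .green ∧ (n < m → G.pred u' (sv n))) ∧ ∀ k < n, t.col (tv k) ≠ .red by
    obtain ⟨t, hst, -, htv⟩ := this m le_rfl
    exact ⟨t, hst, htv⟩
  intro n hn
  induction n with
  | zero => exact ⟨s, .refl, ⟨u, hug, hm0⟩, fun _ hk => absurd hk (Nat.not_lt_zero _)⟩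
  | succ n ih =>
    obtain ⟨t, hst, ⟨u', hu'g, hu'⟩, hdone⟩ := ih (Nat.le_of_succ_le hn)
    obtain ⟨t', htt', hsv, htv'⟩ := (hs.of_reflTransGen hwf hst).exists_slave_ne_red hwf
      (hu' hn) hu'g (hmatch n hn) (hpq n hn) (col_eq_green_of_reflTransGen hst (hstS n hn))
      (hqt n hn) (htv n hn)
    refine ⟨t', hst.trans htt', ⟨sv n, hsv, hchain n⟩, fun k hk => ?_⟩
    rcases Nat.lt_succ_iff_lt_or_eq.mp hk with hk | rfl
    · exact col_ne_red_of_reflTransGen htt' (hdone k hk)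
    · exact htv'

end Consistent

end Colouring

/-- The master component is `stM → rs → sv 0 → ⋯ → sv (m - 1)` with `rs` matched to the external
send `sE`; slave `k` is `stS k → qv k → tv k` with `sv k` matched to `qv k`. -/
theorem disperser_widget_general {V : Type} [DecidableEq V]
    (G : CommGraph V) (hwf : G.WF) (B : ℕ → ℕ) (m : ℕ)
    (stM rs sE : V) (sv qv tv stS : ℕ → V)
    (hstM : G.isStart stM) (hpred0 : G.pred stM rs)
    (hsE : G.matched sE rs)
    (hm0 : 0 < m → G.pred rs (sv 0))
    (hchain : ∀ k, k + 1 < m → G.pred (sv k) (sv (k + 1)))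
    (hslave : ∀ k < m, G.isSend (sv k) ∧ G.matched (sv k) (qv k) ∧
      G.isStart (stS k) ∧ G.pred (stS k) (qv k) ∧ G.isRecv (qv k) ∧
      G.pred (qv k) (tv k) ∧ G.isSend (tv k))
    (l : List (Rule × St V)) (hseq : IsSeq G (init G B) l)
    (hyel : (finalSt (init G B) l).col rs = Colour.yellow) :
    ∃ l', IsSeq G (finalSt (init G B) l) l' ∧
      ∀ k < m, (finalSt (finalSt (init G B) l) l').col (tv k) ≠ Colour.red := by
  choose _ hmatch hstS hpq _ hqt htv using hslave
  have h₀ := reflTransGen_finalSt hseq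
  have hs₀ := (consistent_init hwf B).of_reflTransGen hwf h₀
  obtain ⟨s₁, h₁, hrs₁⟩ := hs₀.exists_recv_green hwf hsE (by simp [hyel]) hpred0
    (col_eq_green_of_reflTransGen h₀ (init_col_of_isStart B hstM))
  have hstS₁ k hk := col_eq_green_of_reflTransGen (h₀.trans h₁) (init_col_of_isStart B (hstS k hk))
  obtain ⟨s₂, h₂, htv₂⟩ := (hs₀.of_reflTransGen hwf h₁).exists_slaves_ne_red hwf hrs₁ hm0 hchain
    hmatch hpq hstS₁ hqt htv
  obtain ⟨l', hl', rfl⟩ := exists_isSeq_of_reflTransGen (h₁.trans h₂)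
  exact ⟨l', hl', htv₂⟩

/-- **Disperser-widget property.** An `(s, R)`-disperser consists of a master
component `start → r_s → s_0 → … → s_{m-1}` (with `r_s` matched to the external
send `sE`) and, for each `k < m`, a slave component `start → q_k → t_k` with
`s_k` matched to `q_k` and `t_k` a send vertex. If a colouring sequence colours
`r_s` yellow, then it can be extended so that every `t_k` is coloured yellow —
even with zero tokens on all disperser components. -/
theorem disperser_widget {V : Type} [DecidableEq V] [Fintype V]
    (G : CommGraph V) (hwf : G.WF) (B : ℕ → ℕ) (m : ℕ)
    (stM rs sE : V) (sv qv tv stS : ℕ → V)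
    (hstM : G.isStart stM) (hpred0 : G.pred stM rs) (hrs : G.isRecv rs)
    (hsE : G.matched sE rs)
    (hm0 : 0 < m → G.pred rs (sv 0))
    (hchain : ∀ k, k + 1 < m → G.pred (sv k) (sv (k + 1)))
    (hslave : ∀ k < m, G.isSend (sv k) ∧ G.matched (sv k) (qv k) ∧
      G.isStart (stS k) ∧ G.pred (stS k) (qv k) ∧ G.isRecv (qv k) ∧
      G.pred (qv k) (tv k) ∧ G.isSend (tv k))
    (hB : B (G.comp rs) = 0) (hBslave : ∀ k < m, B (G.comp (qv k)) = 0)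
    (l : List (Rule × St V)) (hseq : IsSeq G (init G B) l)
    (hyel : (finalSt (init G B) l).col rs = Colour.yellow) :
    ∃ l', IsSeq G (finalSt (init G B) l) l' ∧
      ∀ k < m, (finalSt (finalSt (init G B) l) l').col (tv k) ≠ Colour.red :=
  disperser_widget_general G hwf B m stM rs sE sv qv tv stS hstM hpred0 hsE hm0 hchain hslave l hseq
    hyel
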